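/- arXiv:math/0111318 — 2 statements merged into one kernel-verified Lean document; each statement's English description precedes it below -/
import Mathlib

section
/- For every α > 2 and β = (2α+1)/(α−2), there exists h₁ > 0 such that for all h ≥ h₁, all s ∈ [0, 2π/h], and all a ∈ [−π²/(α h³), 0], the characteristic quasipolynomial p(z) = z + 1 + exp(−z h) satisfies |p(a + i s)| ≥ π²/(β h²). -/
/-!
Put `t = 1/h`, `x = s h` and `y = -a h`, so that `0 ≤ y ≤ π² t² / α`,
`Re p = 1 - y t + eʸ cos x` and `Im p = x t - eʸ sin x`. If `|Im p|` already reaches the bound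
there is nothing to prove. Otherwise `eʸ sin x = x t + O(t²)`: either `cos x ≥ 0` and `Re p ≥ 1/2`,
or `x ∈ (π/2, π)`, where Jordan's inequality forces `π - x = O(t)` and hence
`eʸ sin x ≥ π t - O(t²)`. As `sin² x ≤ 2 (1 + cos x)`, this gives
`Re p ≥ π² t²/2 - y - O(t³) ≥ π² t² (α - 2)/(2α) - O(t³)`, which exceeds
`π² t² (α - 2)/(2α + 1) = π²/(β h²)` once `t ≲ (α - 2)/α²`.
-/

open Real

open Complex in
lemma re_quasipoly (h a s : ℝ) :
    ((a + s * I) + 1 + Complex.exp (-(a + s * I) * h)).re =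
      a + 1 + Real.exp (-(a * h)) * Real.cos (s * h) := by
  simp [Complex.exp_re, Complex.mul_re, Complex.mul_im]

open Complex in
lemma im_quasipoly (h a s : ℝ) :
    ((a + s * I) + 1 + Complex.exp (-(a + s * I) * h)).im =
      s - Real.exp (-(a * h)) * Real.sin (s * h) := by
  simp [Complex.exp_im, Complex.mul_re, Complex.mul_im]
  ring

lemma sin_sq_le_two_mul_one_add_cos (x : ℝ) : sin x ^ 2 ≤ 2 * (1 + cos x) := by
  nlinarith [sin_sq_add_cos_sq x, neg_one_le_cos x, cos_le_one x]

lemma pi_sub_le_mul_sin {x : ℝ} (hx : π / 2 ≤ x) (hx' : x ≤ π) : π - x ≤ π / 2 * sin x := by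
  have := mul_le_sin (x := π - x) (by linarith) (by linarith)
  rw [sin_pi_sub] at this
  have hπ := pi_pos
  calc π - x = π / 2 * (2 / π * (π - x)) := by field_simp
    _ ≤ π / 2 * sin x := by gcongr

lemma exp_mul_one_sub_le (y : ℝ) : exp y * (1 - y) ≤ 1 := by
  calc exp y * (1 - y) ≤ exp y * exp (-y) := by gcongr; exact one_sub_le_exp_neg y
    _ = 1 := by rw [← exp_add, add_neg_cancel, exp_zero]

lemma sub_le_mul_sin_of_cos_neg {t x E : ℝ} (ht : 0 < t) (ht' : t ≤ 1 / 100) (hx : 0 ≤ x)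
    (hx' : x ≤ 2 * π) (hcos : cos x < 0) (hE : 1 ≤ E) (him : |x * t - E * sin x| < 5 * t ^ 2) :
    π * t - 11 * t ^ 2 ≤ E * sin x := by
  have hπ3 := pi_gt_three
  have hπ4 := pi_lt_d2
  have hπ2 : π ^ 2 < 10 := by nlinarith
  obtain ⟨him_lo, him_hi⟩ := abs_lt.mp him
  have hx_gt : π / 2 < x := by
    by_contra! hx_le
    exact hcos.not_ge (cos_nonneg_of_neg_pi_div_two_le_of_le (by linarith) hx_le)
  have hsin : 0 < sin x := by
    refine pos_of_mul_pos_right ?_ (zero_le_one.trans hE)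
    nlinarith
  have hx_lt : x < π := by
    by_contra! hx_ge
    have := sin_nonpos_of_nonpos_of_neg_pi_le (x := x - 2 * π) (by linarith) (by linarith)
    rw [sin_sub_two_pi] at this
    linarith
  have hx_near : π - x ≤ 6 * t := by
    calc π - x ≤ π / 2 * (E * sin x) := by
          refine (pi_sub_le_mul_sin hx_gt.le hx_lt.le).trans ?_
          gcongr
          nlinarith
      _ ≤ π / 2 * (π * t + 5 * t ^ 2) := by gcongr; nlinarith
      _ ≤ 6 * t := by
          have : π * t ≤ 1 / 25 := by nlinarith
          nlinarith
  nlinarith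

lemma re_ge_of_abs_im_lt {t x y : ℝ} (ht : 0 < t) (ht' : t ≤ 1 / 100) (hy : 0 ≤ y)
    (hy' : y ≤ 5 * t ^ 2) (hx : 0 ≤ x) (hx' : x ≤ 2 * π)
    (him : |x * t - exp y * sin x| < 5 * t ^ 2) :
    π ^ 2 * t ^ 2 / 2 - y - 41 * t ^ 3 ≤ 1 - y * t + exp y * cos x := by
  have hπ3 := pi_gt_three
  have hπ2 : π ^ 2 < 10 := by nlinarith [pi_lt_d2]
  have ht_sq : t ^ 2 ≤ 1 / 10000 := by nlinarith
  have hE : 1 ≤ exp y := one_le_exp hy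
  rcases le_or_gt 0 (cos x) with hcos | hcos
  · nlinarith [mul_nonneg (zero_le_one.trans hE) hcos]
  have hsin := sub_le_mul_sin_of_cos_neg ht ht' hx hx' hcos hE him
  set E := exp y
  set P := E * sin x
  have hE_inv : E * (1 - y) ≤ 1 := exp_mul_one_sub_le y
  have hE_sub : E - 1 ≤ y + 2 * y ^ 2 := by nlinarith
  have hP_sq : π ^ 2 * t ^ 2 - 22 * π * t ^ 3 ≤ P ^ 2 := by
    have : 0 ≤ π * t - 11 * t ^ 2 := by nlinarith
    nlinarith [pow_le_pow_left₀ this hsin 2]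
  have hcos_sin : P ^ 2 * (1 - y) ≤ 2 * E * (1 + cos x) := by
    calc P ^ 2 * (1 - y) = E * (E * (1 - y)) * sin x ^ 2 := by ring
      _ ≤ E * 1 * (2 * (1 + cos x)) := by gcongr; exact sin_sq_le_two_mul_one_add_cos x
      _ = 2 * E * (1 + cos x) := by ring
  have hP_sq' : π ^ 2 * t ^ 2 - 22 * π * t ^ 3 - π ^ 2 * t ^ 2 * y ≤ P ^ 2 * (1 - y) := by
    nlinarith [mul_nonneg (mul_nonneg pi_pos.le (pow_pos ht 3).le) hy]
  have hy_sq : 2 * y ^ 2 ≤ t ^ 3 / 2 := by nlinarith [pow_pos ht 3]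
  have hyt : y * t ≤ 5 * t ^ 3 := by nlinarith
  have hπt : 11 * π * t ^ 3 ≤ 35 * t ^ 3 := by nlinarith [pow_pos ht 3, pi_lt_d2]
  have hπty : π ^ 2 * t ^ 2 * y / 2 ≤ t ^ 3 / 4 := by
    have h1 : t ^ 2 * y ≤ 5 * t ^ 4 := by nlinarith
    have h2 : π ^ 2 * (t ^ 2 * y) ≤ 10 * (t ^ 2 * y) := by gcongr
    have h3 : t ^ 4 ≤ t ^ 3 / 100 := by nlinarith [pow_pos ht 3]
    nlinarith
  nlinarith

lemma le_abs_im_or_le_re {α t x y : ℝ} (hα : 2 < α) (ht : 0 < t)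
    (htα : t * (9 * α * (2 * α + 1)) ≤ α - 2) (hy : 0 ≤ y) (hy' : y ≤ π ^ 2 * t ^ 2 / α)
    (hx : 0 ≤ x) (hx' : x ≤ 2 * π) :
    π ^ 2 * (α - 2) / (2 * α + 1) * t ^ 2 ≤ |x * t - exp y * sin x| ∨
      π ^ 2 * (α - 2) / (2 * α + 1) * t ^ 2 ≤ 1 - y * t + exp y * cos x := by
  have hα0 : 0 < α := by linarith
  have hπ2 : π ^ 2 < 10 := by nlinarith [pi_lt_d2, pi_pos]
  have hπ2' : 9.8 < π ^ 2 := by nlinarith [pi_gt_d2]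
  have ht' : t ≤ 1 / 100 := by
    have : t * 100 * (α - 2) ≤ t * (9 * α * (2 * α + 1)) := by
      -- `9α(2α + 1) - 100(α - 2) = 18(α - 91/36)² + (200 - 91²/72)`
      nlinarith [mul_nonneg ht.le (sq_nonneg (α - 91 / 36))]
    nlinarith
  have hε : π ^ 2 * (α - 2) / (2 * α + 1) ≤ 5 := by
    rw [div_le_iff₀ (by positivity)]
    nlinarith
  rcases le_or_gt (π ^ 2 * (α - 2) / (2 * α + 1) * t ^ 2) |x * t - exp y * sin x| with him | him
  · exact .inl him
  right
  have hy5 : y ≤ 5 * t ^ 2 := by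
    refine hy'.trans ?_
    rw [div_le_iff₀ hα0]
    nlinarith [sq_nonneg t]
  have hre := re_ge_of_abs_im_lt ht ht' hy hy5 hx hx'
    (him.trans_le (mul_le_mul_of_nonneg_right hε (sq_nonneg t)))
  have slack : π ^ 2 * t ^ 2 / 2 - π ^ 2 * t ^ 2 / α - π ^ 2 * (α - 2) / (2 * α + 1) * t ^ 2
      = π ^ 2 * t ^ 2 * (α - 2) / (2 * α * (2 * α + 1)) := by
    field_simp
    ring
  have herr : 41 * t ^ 3 ≤ π ^ 2 * t ^ 2 * (α - 2) / (2 * α * (2 * α + 1)) := by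
    rw [le_div_iff₀ (by positivity)]
    have := mul_le_mul_of_nonneg_left htα (by positivity : (0:ℝ) ≤ 82 / 9 * t ^ 2)
    nlinarith [mul_le_mul_of_nonneg_right hπ2'.le (by nlinarith : (0:ℝ) ≤ t ^ 2 * (α - 2))]
  linarith

open Complex in
theorem stmt_6 (α : ℝ) (hα : 2 < α) (β : ℝ) (hβ : β = (2 * α + 1) / (α - 2)) :
    ∃ h₁ > (0:ℝ), ∀ h ≥ h₁, ∀ s ∈ Set.Icc (0:ℝ) (2 * Real.pi / h),
      ∀ a ∈ Set.Icc (-Real.pi^2 / (α * h^3)) (0:ℝ),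
        ‖(a + s * I) + 1 + Complex.exp (-(a + s * I) * h)‖ ≥
          Real.pi^2 / (β * h^2) := by
  have hα0 : 0 < α := by linarith
  have hα2 : 0 < α - 2 := by linarith
  refine ⟨9 * α * (2 * α + 1) / (α - 2), by positivity,
    fun h hh s ⟨hs0, hs⟩ a ⟨ha, ha0⟩ => ?_⟩
  have h0 : 0 < h := lt_of_lt_of_le (by positivity) hh
  set t := h⁻¹ with ht_def
  have htα : t * (9 * α * (2 * α + 1)) ≤ α - 2 := by
    rw [ge_iff_le, div_le_iff₀ hα2] at hh
    calc t * (9 * α * (2 * α + 1)) ≤ t * (h * (α - 2)) := by gcongr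
      _ = α - 2 := by rw [ht_def]; field_simp
  have hy : -(a * h) ≤ π ^ 2 * t ^ 2 / α := by
    rw [neg_div, neg_le, le_div_iff₀ (by positivity)] at ha
    calc -(a * h) = -a * (α * h ^ 3) * (t ^ 2 / α) := by rw [ht_def]; field_simp
      _ ≤ π ^ 2 * t ^ 2 / α := by rw [← mul_div_assoc]; gcongr
  have hx : s * h ≤ 2 * π := by rwa [le_div_iff₀ h0] at hs
  have hs_eq : s * h * t = s := by rw [ht_def]; field_simp
  have ha_eq : 1 - -(a * h) * t = a + 1 := by rw [ht_def]; field_simp; ring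
  have hbound : π ^ 2 / (β * h ^ 2) = π ^ 2 * (α - 2) / (2 * α + 1) * t ^ 2 := by
    rw [hβ, ht_def]; field_simp
  rw [ge_iff_le, hbound]
  rcases le_abs_im_or_le_re hα (inv_pos.mpr h0) htα (by nlinarith) hy (by positivity) hx
    with him | hre
  · rw [hs_eq, ← im_quasipoly] at him
    exact him.trans (abs_im_le_norm _)
  · rw [ha_eq, ← re_quasipoly] at hre
    exact hre.trans (re_le_norm _)
end

section
/- For every α > 2, with a(h) = 1 − π²/(α h³) and b(h) = exp(π²/(α h²)), and R(h) = ∫_0^1 3 ds/((s+π/h)² + 1 − b(h)²/a(h)²), the limit of R(h)/h as h → ∞ exists and is finite and positive. -/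
open Filter Real in

lemma int_eval (p k : ℝ) (hk : 0 < k) (hkp : k < p) :
    ∫ s in (0:ℝ)..1, 3 / ((s + p)^2 - k^2)
      = 3/(2*k) * ((Real.log (1+p-k) - Real.log (1+p+k))
          - (Real.log (p-k) - Real.log (p+k))) := by
  have hne : ∀ s ∈ Set.uIcc (0:ℝ) 1, (s+p)^2 - k^2 ≠ 0 := by
    intro s hs
    rw [Set.uIcc_of_le (by norm_num)] at hs
    have h1 : 0 < s + p - k := by linarith [hs.1]
    have h2 : 0 < s + p + k := by linarith [hs.1]
    have : (s+p)^2 - k^2 = (s+p-k)*(s+p+k) := by ring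
    rw [this]
    positivity
  have hderiv : ∀ s ∈ Set.uIcc (0:ℝ) 1,
      HasDerivAt (fun s => 3/(2*k) * (Real.log (s+p-k) - Real.log (s+p+k)))
        (3 / ((s + p)^2 - k^2)) s := by
    intro s hs
    rw [Set.uIcc_of_le (by norm_num)] at hs
    have h1 : 0 < s + p - k := by linarith [hs.1]
    have h2 : 0 < s + p + k := by linarith [hs.1]
    have d1 : HasDerivAt (fun s : ℝ => Real.log (s+p-k)) (1/(s+p-k)) s := by
      have h1' : s + (p - k) ≠ 0 := by intro hh; rw [← add_sub_assoc] at hh; linarith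
      have d' := (Real.hasDerivAt_log h1').comp s ((hasDerivAt_id s).add_const (p-k))
      simp only [add_sub_assoc]
      simpa [Function.comp_def] using d'
    have d2 : HasDerivAt (fun s : ℝ => Real.log (s+p+k)) (1/(s+p+k)) s := by
      have h2' : s + (p + k) ≠ 0 := by intro hh; rw [← add_assoc] at hh; linarith
      have d' := (Real.hasDerivAt_log h2').comp s ((hasDerivAt_id s).add_const (p+k))
      simp only [add_assoc]
      simpa [Function.comp_def] using d'
    have : HasDerivAt (fun s => 3/(2*k) * (Real.log (s+p-k) - Real.log (s+p+k)))
        (3/(2*k) * (1/(s+p-k) - 1/(s+p+k))) s := ((d1.sub d2).const_mul (3/(2*k)))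
    convert this using 1
    have hne2 : (s+p)^2 - k^2 ≠ 0 := by
      have : (s+p)^2 - k^2 = (s+p-k)*(s+p+k) := by ring
      rw [this]; positivity
    field_simp
    ring
  have hint : IntervalIntegrable (fun s => 3 / ((s + p)^2 - k^2)) MeasureTheory.volume 0 1 := by
    apply ContinuousOn.intervalIntegrable
    exact continuousOn_const.div (by fun_prop) hne
  have := intervalIntegral.integral_eq_sub_of_hasDerivAt hderiv hint
  rw [this]
  rw [show (0:ℝ) + p - k = p - k by ring, show (0:ℝ) + p + k = p + k by ring]
  ring

open Filter Real in

lemma hc2_lemma (α : ℝ) (hα : 2 < α) :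
    Tendsto (fun h : ℝ => h^2 * ((Real.exp (Real.pi^2/(α*h^2)))^2/(1 - Real.pi^2/(α*h^3))^2 - 1))
      atTop (nhds (2*Real.pi^2/α)) := by
  have hα0 : (0:ℝ) < α := by linarith
  have hπ := Real.pi_pos
  have hexp : Tendsto (fun h:ℝ => h^2 * (Real.exp (2*Real.pi^2/(α*h^2)) - 1)) atTop
      (nhds (2*Real.pi^2/α)) := by
    have hs : Tendsto (slope Real.exp 0) (nhdsWithin 0 {(0:ℝ)}ᶜ) (nhds 1) := by
      have := Real.hasDerivAt_exp 0
      rw [hasDerivAt_iff_tendsto_slope] at this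
      simpa using this
    have ht : Tendsto (fun h:ℝ => 2*Real.pi^2/(α*h^2)) atTop (nhdsWithin 0 {(0:ℝ)}ᶜ) := by
      rw [tendsto_nhdsWithin_iff]
      constructor
      · have : Tendsto (fun h:ℝ => 2*Real.pi^2/α/h^2) atTop (nhds 0) :=
          tendsto_const_nhds.div_atTop (tendsto_pow_atTop (by norm_num))
        simpa [div_div] using this
      · filter_upwards [eventually_gt_atTop 0] with h h0
        have : 0 < 2*Real.pi^2/(α*h^2) := by positivity
        simpa using this.ne'
    have hmul := (hs.comp ht).mul_const (2*Real.pi^2/α)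
    rw [one_mul] at hmul
    apply Tendsto.congr' _ hmul
    filter_upwards [eventually_gt_atTop 0] with h h0
    have htpos : 0 < 2*Real.pi^2/(α*h^2) := by positivity
    have hh : h ≠ 0 := h0.ne'
    simp only [Function.comp_apply, slope_def_field, Real.exp_zero, sub_zero]
    rw [div_mul_eq_mul_div, div_eq_iff htpos.ne']
    field_simp
  have htail1 : Tendsto (fun h:ℝ => 2*Real.pi^2/α/h) atTop (nhds 0) :=
    tendsto_const_nhds.div_atTop tendsto_id
  have htail2 : Tendsto (fun h:ℝ => Real.pi^4/α^2/h^4) atTop (nhds 0) :=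
    tendsto_const_nhds.div_atTop (tendsto_pow_atTop (by norm_num))
  have hy : Tendsto (fun h:ℝ => Real.pi^2/(α*h^3)) atTop (nhds 0) := by
    have : Tendsto (fun h:ℝ => Real.pi^2/α/h^3) atTop (nhds 0) :=
      tendsto_const_nhds.div_atTop (tendsto_pow_atTop (by norm_num))
    simpa [div_div] using this
  have hden : Tendsto (fun h:ℝ => (1 - Real.pi^2/(α*h^3))^2) atTop (nhds 1) := by
    have := ((tendsto_const_nhds (x := (1:ℝ))).sub hy).pow 2
    rw [sub_zero, one_pow] at this
    exact this
  have hcomb := (hexp.add (htail1.sub htail2)).div hden (one_ne_zero)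
  norm_num at hcomb
  apply Tendsto.congr' _ hcomb
  filter_upwards [eventually_gt_atTop 0, hy.eventually_lt_const (by norm_num : (0:ℝ) < 1)]
    with h h0 hy1
  have hh : h ≠ 0 := h0.ne'
  have hden0 : (1:ℝ) - Real.pi^2/(α*h^3) ≠ 0 := by linarith
  have hα' : α ≠ 0 := hα0.ne'
  simp only [Pi.div_apply]
  rw [show (2:ℝ)*Real.pi^2/(α*h^2) = Real.pi^2/(α*h^2) + Real.pi^2/(α*h^2) by ring,
    Real.exp_add, ← sq]
  rw [div_sub_one (pow_ne_zero 2 hden0), ← mul_div_assoc]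
  congr 1
  field_simp
  ring

open Filter Real in

lemma stmt9_main (α : ℝ) (hα : 2 < α)
    (int_eval : ∀ p k : ℝ, 0 < k → k < p →
      (∫ s in (0:ℝ)..1, 3 / ((s + p)^2 - k^2))
        = 3/(2*k) * ((Real.log (1+p-k) - Real.log (1+p+k))
            - (Real.log (p-k) - Real.log (p+k))))
    (hc2 : Tendsto (fun h : ℝ =>
        h^2 * ((Real.exp (Real.pi^2/(α*h^2)))^2/(1 - Real.pi^2/(α*h^3))^2 - 1))
      atTop (nhds (2*Real.pi^2/α))) :
    ∃ L : ℝ, 0 < L ∧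
      Tendsto (fun h : ℝ =>
          (∫ s in (0:ℝ)..1, 3 / ((s + Real.pi / h)^2 +
            (1 - (Real.exp (Real.pi^2 / (α * h^2)))^2 / (1 - Real.pi^2 / (α * h^3))^2))) / h)
        atTop (nhds L) := by
  have hα0 : (0:ℝ) < α := by linarith
  have hπ := Real.pi_pos
  set c : ℝ → ℝ := fun h =>
    (Real.exp (Real.pi^2/(α*h^2)))^2/(1 - Real.pi^2/(α*h^3))^2 - 1 with hcdef
  set K : ℝ → ℝ := fun h => Real.sqrt (h^2 * c h) with hKdef
  set κ : ℝ := Real.sqrt (2*Real.pi^2/α) with hκdef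
  have hlt : 2*Real.pi^2/α < Real.pi^2 := by
    rw [div_lt_iff₀ hα0]
    nlinarith [mul_pos (mul_pos hπ hπ) (by linarith : (0:ℝ) < α - 2), sq (Real.pi)]
  have hκpos : 0 < κ := Real.sqrt_pos.2 (by positivity)
  have hκπ : κ < Real.pi := by
    calc κ < Real.sqrt (Real.pi^2) := Real.sqrt_lt_sqrt (by positivity) hlt
    _ = Real.pi := Real.sqrt_sq hπ.le
  set L : ℝ := 3/(2*κ) * (Real.log (Real.pi+κ) - Real.log (Real.pi-κ)) with hLdef
  have hLpos : 0 < L := by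
    have := Real.log_lt_log (by linarith : (0:ℝ) < Real.pi - κ)
      (by linarith : Real.pi - κ < Real.pi + κ)
    have h1 : 0 < 3/(2*κ) := by positivity
    have h2 : 0 < Real.log (Real.pi+κ) - Real.log (Real.pi-κ) := by linarith
    positivity
  have hK : Tendsto K atTop (nhds κ) := (Real.continuous_sqrt.tendsto _).comp hc2
  -- limit of the model function
  have hr1 : Tendsto (fun h => (Real.pi - K h)/h) atTop (nhds 0) :=
    (tendsto_const_nhds.sub hK).div_atTop tendsto_id
  have hr2 : Tendsto (fun h => (Real.pi + K h)/h) atTop (nhds 0) :=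
    (tendsto_const_nhds.add hK).div_atTop tendsto_id
  have l1 : Tendsto (fun h => Real.log (1 + (Real.pi - K h)/h)) atTop (nhds 0) := by
    have h1 : Tendsto (fun h => 1 + (Real.pi - K h)/h) atTop (nhds 1) := by
      simpa using tendsto_const_nhds.add hr1
    have := ((Real.continuousAt_log one_ne_zero).tendsto).comp h1
    simpa [Function.comp_def] using this
  have l2 : Tendsto (fun h => Real.log (1 + (Real.pi + K h)/h)) atTop (nhds 0) := by
    have h1 : Tendsto (fun h => 1 + (Real.pi + K h)/h) atTop (nhds 1) := by
      simpa using tendsto_const_nhds.add hr2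
    have := ((Real.continuousAt_log one_ne_zero).tendsto).comp h1
    simpa [Function.comp_def] using this
  have l3 : Tendsto (fun h => Real.log (Real.pi + K h)) atTop (nhds (Real.log (Real.pi + κ))) := by
    exact ((Real.continuousAt_log (by linarith)).tendsto).comp (tendsto_const_nhds.add hK)
  have l4 : Tendsto (fun h => Real.log (Real.pi - K h)) atTop (nhds (Real.log (Real.pi - κ))) := by
    exact ((Real.continuousAt_log (by linarith)).tendsto).comp (tendsto_const_nhds.sub hK)
  have lcoef : Tendsto (fun h => 3/(2*K h)) atTop (nhds (3/(2*κ))) :=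
    tendsto_const_nhds.div (tendsto_const_nhds.mul hK) (by positivity)
  have hG : Tendsto (fun h => 3/(2*K h) *
      ((Real.log (1 + (Real.pi - K h)/h) - Real.log (1 + (Real.pi + K h)/h))
        + (Real.log (Real.pi + K h) - Real.log (Real.pi - K h)))) atTop (nhds L) := by
    have := lcoef.mul ((l1.sub l2).add (l3.sub l4))
    simpa using this
  refine ⟨L, hLpos, ?_⟩
  apply hG.congr'
  filter_upwards [eventually_ge_atTop 1,
    hc2.eventually (Ioo_mem_nhds (by positivity) hlt)] with h h1 h2c
  have h0 : (0:ℝ) < h := by linarith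
  have hh : h ≠ 0 := h0.ne'
  have hcpos : 0 < c h := by
    have : c h = (h^2 * c h)/h^2 := by field_simp
    rw [this]; exact div_pos h2c.1 (by positivity)
  set k : ℝ := Real.sqrt (c h) with hk
  have kpos : 0 < k := Real.sqrt_pos.2 hcpos
  have hKk : K h = h * k := by
    rw [hKdef]; dsimp only
    rw [Real.sqrt_mul (sq_nonneg h), Real.sqrt_sq h0.le]
  have hKπ : K h < Real.pi := by
    rw [hKdef]; dsimp only
    calc Real.sqrt (h^2 * c h) < Real.sqrt (Real.pi^2) := Real.sqrt_lt_sqrt h2c.1.le h2c.2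
    _ = Real.pi := Real.sqrt_sq hπ.le
  have hkp : k < Real.pi / h := by
    rw [lt_div_iff₀ h0]; rw [hKk] at hKπ; linarith [hKπ]
  have ksq : k^2 = c h := Real.sq_sqrt hcpos.le
  have hint : (∫ s in (0:ℝ)..1, 3 / ((s + Real.pi / h)^2 +
      (1 - (Real.exp (Real.pi^2 / (α * h^2)))^2 / (1 - Real.pi^2 / (α * h^3))^2)))
      = 3/(2*k) * ((Real.log (1+Real.pi/h-k) - Real.log (1+Real.pi/h+k))
          - (Real.log (Real.pi/h-k) - Real.log (Real.pi/h+k))) := by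
    have harg : ∀ s : ℝ, (s + Real.pi / h)^2 +
        (1 - (Real.exp (Real.pi^2 / (α * h^2)))^2 / (1 - Real.pi^2 / (α * h^3))^2)
        = (s + Real.pi / h)^2 - k^2 := by
      intro s
      rw [ksq, hcdef]
      ring
    simp only [harg]
    exact int_eval (Real.pi/h) k kpos hkp
  have hπK : 0 < Real.pi - K h := by linarith
  have e1 : (Real.pi - K h)/h = Real.pi/h - k := by rw [hKk]; field_simp; try ring
  have e2 : (Real.pi + K h)/h = Real.pi/h + k := by rw [hKk]; field_simp; try ring
  have e3 : Real.log (Real.pi/h - k) = Real.log (Real.pi - K h) - Real.log h := by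
    rw [← e1]; exact Real.log_div hπK.ne' hh
  have hKpos : 0 < K h := by rw [hKk]; positivity
  have e4 : Real.log (Real.pi/h + k) = Real.log (Real.pi + K h) - Real.log h := by
    rw [← e2]; exact Real.log_div (by linarith) hh
  rw [hint, e1, e2,
    show (1:ℝ) + (Real.pi/h - k) = 1 + Real.pi/h - k by ring,
    show (1:ℝ) + (Real.pi/h + k) = 1 + Real.pi/h + k by ring,
    e3, e4, hKk]
  field_simp
  ring

open Filter in
theorem stmt_9 (α : ℝ) (hα : 2 < α) :
    ∃ L : ℝ, 0 < L ∧
      Tendsto (fun h : ℝ =>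
          (∫ s in (0:ℝ)..1, 3 / ((s + Real.pi / h)^2 +
            (1 - (Real.exp (Real.pi^2 / (α * h^2)))^2 / (1 - Real.pi^2 / (α * h^3))^2))) / h)
        atTop (nhds L) :=
  stmt9_main α hα (fun p k hk hkp => int_eval p k hk hkp) (hc2_lemma α hα)
end
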